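/- arXiv:2303.05900 — 2 statements merged into one kernel-verified Lean document; each statement's English description precedes it below -/
import Mathlib

section
/- Let μ denote the surface measure on the unit sphere S² ⊂ ℝ³, let I̊ : ℝ³ → ℝ be twice continuously differentiable, and let Δ ∈ ℝ^{3×3}. Define G : ℝ → ℝ by G(t) := (1/2)∫_{S²} ( I̊(φ(exp(tΔ), x)) − I̊(x) )² dμ(x), where φ(H, x) := H⁻¹x/‖H⁻¹x‖. Then G is twice differentiable at t = 0, with G'(0) = 0 and G''(0) = ∫_{S²} ⟨(I₃ − xxᵀ)∇I̊(x), Δx⟩² dμ(x). -/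
open Matrix MeasureTheory

noncomputable section

abbrev E3 := EuclideanSpace ℝ (Fin 3)
abbrev M3 := Matrix (Fin 3) (Fin 3) ℝ

/-- Apply a matrix to a Euclidean vector. -/
noncomputable def mApp (M : M3) (x : E3) : E3 := Matrix.toEuclideanLin M x

/-- φ(H,x) := H⁻¹x/‖H⁻¹x‖ -/
noncomputable def sphPhi (H : M3) (x : E3) : E3 := ‖mApp H⁻¹ x‖⁻¹ • mApp H⁻¹ x

/-- outer product u vᵀ as a 3×3 matrix -/
noncomputable def outer (u v : E3) : M3 :=
  Matrix.vecMulVec ((EuclideanSpace.equiv (Fin 3) ℝ) u) ((EuclideanSpace.equiv (Fin 3) ℝ) v)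

/-- Π_x := I₃ − xxᵀ -/
noncomputable def projMat (x : E3) : M3 := 1 - outer x x

/-- The surface measure on the unit sphere S² ⊂ ℝ³, viewed as a measure on ℝ³
supported on the sphere. -/
noncomputable def μS : Measure E3 := ((volume : Measure E3).toSphere).map Subtype.val

open NormedSpace

attribute [local instance] Matrix.linftyOpNormedRing Matrix.linftyOpNormedAlgebra

def matToCLM : M3 →L[ℝ] (E3 →L[ℝ] E3) :=
  LinearMap.toContinuousLinearMap
    ((LinearMap.toContinuousLinearMap : (E3 →ₗ[ℝ] E3) ≃ₗ[ℝ] (E3 →L[ℝ] E3)).toLinearMap ∘ₗ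
      (Matrix.toEuclideanLin : M3 ≃ₗ[ℝ] (E3 →ₗ[ℝ] E3)).toLinearMap)

lemma contDiff_expLine (B : M3) : ContDiff ℝ 2 (fun s : ℝ => exp (s • B)) := by
  have h1 : ∀ s : ℝ, HasDerivAt (fun s : ℝ => exp (s • B)) (exp (s • B) * B) s :=
    fun s => hasDerivAt_exp_smul_const B s
  have hder : deriv (fun s : ℝ => exp (s • B)) = fun s => exp (s • B) * B :=
    funext fun s => (h1 s).deriv
  have h2 : ∀ s : ℝ, HasDerivAt (fun s : ℝ => exp (s • B) * B) (exp (s • B) * B * B) s :=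
    fun s => (h1 s).mul_const B
  have hder2 : deriv (fun s : ℝ => exp (s • B) * B) = fun s => exp (s • B) * B * B :=
    funext fun s => (h2 s).deriv
  rw [show (2 : WithTop ℕ∞) = 1 + 1 from rfl, contDiff_succ_iff_deriv]
  refine ⟨fun s => (h1 s).differentiableAt, by simp, ?_⟩
  erw [hder, contDiff_one_iff_deriv]
  exact ⟨fun s => (h2 s).differentiableAt, by
    erw [hder2]
    exact Differentiable.continuous fun s => ((h2 s).mul_const B).differentiableAt⟩

lemma contDiff_cU (B : M3) : ContDiff ℝ 2 (fun p : ℝ × E3 => mApp (exp (p.1 • B)) p.2) := by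
  have h : (fun p : ℝ × E3 => mApp (exp (p.1 • B)) p.2)
      = fun p : ℝ × E3 => (matToCLM (exp (p.1 • B))) p.2 := rfl
  rw [h]
  exact (isBoundedBilinearMap_apply.contDiff.of_le le_top).comp
    ((matToCLM.contDiff.comp (((contDiff_expLine B)).comp contDiff_fst)).prodMk contDiff_snd)

def ψ (y : E3) : E3 := ‖y‖⁻¹ • y

lemma contDiffOn_psi : ContDiffOn ℝ 2 ψ {y : E3 | y ≠ 0} := by
  intro y hy
  exact (((contDiffAt_norm (𝕜 := ℝ) hy).inv (norm_ne_zero_iff.2 hy)).smul contDiffAt_id).contDiffWithinAt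

lemma mApp_mul (M N : M3) (x : E3) : mApp (M * N) x = mApp M (mApp N x) := by
  simp [mApp, Matrix.toEuclideanLin_apply, Matrix.mulVec_mulVec]

lemma mApp_one (x : E3) : mApp 1 x = x := by
  simp [mApp, Matrix.toEuclideanLin_apply]

lemma mApp_zero (M : M3) : mApp M 0 = 0 := map_zero (Matrix.toEuclideanLin M)

lemma mApp_exp_cancel (C : M3) (x : E3) : mApp (exp (-C)) (mApp (exp C) x) = x := by
  rw [← mApp_mul, ← Matrix.exp_add_of_commute _ _ ((Commute.refl C).neg_left), neg_add_cancel, exp_zero,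
    mApp_one]

def appCLM (x : E3) : M3 →L[ℝ] E3 :=
  LinearMap.toContinuousLinearMap
    ((Matrix.toEuclideanLin : M3 ≃ₗ[ℝ] (E3 →ₗ[ℝ] E3)).toLinearMap.flip x)

lemma appCLM_apply (x : E3) (M : M3) : appCLM x M = mApp M x := rfl

lemma mApp_outer (x u : E3) : mApp (outer x x) u = (inner (𝕜 := ℝ) x u) • x := by
  ext i
  simp [mApp, Matrix.toEuclideanLin_apply, outer, Matrix.mulVec, Matrix.vecMulVec_apply,
    dotProduct, PiLp.inner_apply, RCLike.inner_apply, Finset.sum_mul, Finset.mul_sum,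
    mul_comm, mul_left_comm, mul_assoc]

lemma mApp_proj (x u : E3) : mApp (projMat x) u = u - (inner (𝕜 := ℝ) x u) • x := by
  have : mApp (projMat x) u = appCLM u 1 - appCLM u (outer x x) := by
    rw [projMat, ← map_sub]; rfl
  rw [this, appCLM_apply, appCLM_apply, mApp_one, mApp_outer]

lemma inner_proj_eq (x u w : E3) :
    inner (𝕜 := ℝ) u (w - (inner (𝕜 := ℝ) x w) • x)
      = inner (𝕜 := ℝ) (mApp (projMat x) u) w := by
  rw [mApp_proj, inner_sub_right, inner_sub_left, real_inner_smul_right, real_inner_smul_left]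
  rw [real_inner_comm x u]
  ring

def Px (x : E3) : E3 →L[ℝ] E3 :=
  ContinuousLinearMap.id ℝ E3 - (innerSL ℝ x).smulRight x

lemma hasFDerivAt_psi {x : E3} (hx : ‖x‖ = 1) : HasFDerivAt ψ (Px x) x := by
  have hx0 : x ≠ 0 := by intro h; rw [h] at hx; simp at hx
  have h1 : HasFDerivAt (fun y : E3 => ‖y‖ ^ 2) (2 • (innerSL ℝ x)) x :=
    (hasStrictFDerivAt_norm_sq x).hasFDerivAt
  have h2 : HasDerivAt Real.sqrt (1 / (2 * Real.sqrt (‖x‖ ^ 2))) (‖x‖ ^ 2) := by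
    apply Real.hasDerivAt_sqrt; rw [hx]; norm_num
  have h3 : HasFDerivAt (fun y : E3 => Real.sqrt (‖y‖ ^ 2))
      ((1 / (2 * Real.sqrt (‖x‖ ^ 2))) • (2 • (innerSL ℝ x))) x :=
    h2.comp_hasFDerivAt x h1
  have hsq : (fun y : E3 => Real.sqrt (‖y‖ ^ 2)) = fun y : E3 => ‖y‖ := by
    funext y; exact Real.sqrt_sq (norm_nonneg y)
  have hscal : (1 / (2 * Real.sqrt (‖x‖ ^ 2))) • (2 • (innerSL ℝ x)) = innerSL ℝ x := by
    rw [hx]; ext v; norm_num [Real.sqrt_one]; ring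
  rw [hsq, hscal] at h3
  have h4 : HasFDerivAt (fun y : E3 => ‖y‖⁻¹) (-(‖x‖ ^ 2)⁻¹ • (innerSL ℝ x)) x := by
    have := (hasDerivAt_inv (x := ‖x‖) (by rw [hx]; norm_num)).comp_hasFDerivAt x h3
    simpa [hx, Function.comp_def] using this
  have h5 := h4.smul (hasFDerivAt_id x)
  have : HasFDerivAt (fun y : E3 => ‖y‖⁻¹ • y)
      (‖x‖⁻¹ • ContinuousLinearMap.id ℝ E3
        + (-(‖x‖ ^ 2)⁻¹ • (innerSL ℝ x)).smulRight x) x := h5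
  have heq : (‖x‖⁻¹ • ContinuousLinearMap.id ℝ E3
        + (-(‖x‖ ^ 2)⁻¹ • (innerSL ℝ x)).smulRight x) = Px x := by
    rw [hx]
    ext v
    simp [Px, ContinuousLinearMap.smulRight_apply]
    ring
  rw [heq] at this
  exact this

def VV : Set (ℝ × E3) := {p | p.2 ≠ 0}

lemma isOpen_VV : IsOpen VV := isOpen_compl_singleton.preimage continuous_snd

variable (Δ : M3) (I₀ : E3 → ℝ)

def uf (p : ℝ × E3) : ℝ := I₀ (ψ (mApp (exp (p.1 • (-Δ))) p.2)) - I₀ p.2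
def Df1 (p : ℝ × E3) : ℝ := fderiv ℝ (uf Δ I₀) p (1, 0)
def Df2 (p : ℝ × E3) : ℝ := fderiv ℝ (Df1 Δ I₀) p (1, 0)

variable {I₀}

lemma contDiffOn_uf (hI : ContDiff ℝ 2 I₀) : ContDiffOn ℝ 2 (uf Δ I₀) VV := by
  have hmaps : ∀ p ∈ VV, mApp (exp (p.1 • (-Δ))) p.2 ∈ {y : E3 | y ≠ 0} := by
    intro p hp h0
    apply hp
    have h := congrArg (mApp (exp (-(p.1 • (-Δ))))) h0
    rw [mApp_exp_cancel, mApp_zero] at h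
    exact h
  exact (hI.comp_contDiffOn (contDiffOn_psi.comp (contDiff_cU (-Δ)).contDiffOn hmaps)).sub
    ((hI.comp contDiff_snd).contDiffOn)

lemma hasDerivAt_uf (hI : ContDiff ℝ 2 I₀) (p : ℝ × E3) (hp : p.2 ≠ 0) :
    HasDerivAt (fun s => uf Δ I₀ (s, p.2)) (Df1 Δ I₀ p) p.1 := by
  have hdiff : DifferentiableAt ℝ (uf Δ I₀) p :=
    ((contDiffOn_uf Δ hI).differentiableOn (by norm_num)).differentiableAt
      (isOpen_VV.mem_nhds hp)
  have hline : HasDerivAt (fun s : ℝ => (s, p.2)) ((1 : ℝ), (0 : E3)) p.1 :=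
    (hasDerivAt_id p.1).prodMk (hasDerivAt_const p.1 p.2)
  exact hdiff.hasFDerivAt.comp_hasDerivAt p.1 hline

lemma contDiffOn_Df1 (hI : ContDiff ℝ 2 I₀) : ContDiffOn ℝ 1 (Df1 Δ I₀) VV :=
  (((contDiffOn_uf Δ hI).fderiv_of_isOpen (m := 1) isOpen_VV (by norm_num)).clm_apply contDiffOn_const)

lemma hasDerivAt_Df1 (hI : ContDiff ℝ 2 I₀) (p : ℝ × E3) (hp : p.2 ≠ 0) :
    HasDerivAt (fun s => Df1 Δ I₀ (s, p.2)) (Df2 Δ I₀ p) p.1 := by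
  have hdiff : DifferentiableAt ℝ (Df1 Δ I₀) p :=
    ((contDiffOn_Df1 Δ hI).differentiableOn (by norm_num)).differentiableAt
      (isOpen_VV.mem_nhds hp)
  have hline : HasDerivAt (fun s : ℝ => (s, p.2)) ((1 : ℝ), (0 : E3)) p.1 :=
    (hasDerivAt_id p.1).prodMk (hasDerivAt_const p.1 p.2)
  exact hdiff.hasFDerivAt.comp_hasDerivAt p.1 hline

lemma continuousOn_Df2 (hI : ContDiff ℝ 2 I₀) : ContinuousOn (Df2 Δ I₀) VV :=
  (((contDiffOn_Df1 Δ hI).fderiv_of_isOpen (m := 0) isOpen_VV (by norm_num)).clm_apply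
    contDiffOn_const).continuousOn

lemma inner_gradient (f : E3 → ℝ) (x v : E3) :
    inner (𝕜 := ℝ) (gradient f x) v = fderiv ℝ f x v :=
  InnerProductSpace.toDual_symm_apply

lemma e0_lemma (x : E3) : mApp (exp ((0 : ℝ) • (-Δ))) x = x := by
  rw [zero_smul, exp_zero, mApp_one]

lemma psi_unit {x : E3} (hx : ‖x‖ = 1) : ψ x = x := by
  rw [ψ, hx]; simp

lemma uf_zero {x : E3} (hx : ‖x‖ = 1) : uf Δ I₀ (0, x) = 0 := by
  simp [uf, mApp_one, psi_unit hx]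

lemma hasDerivAt_uf_zero (hI : ContDiff ℝ 2 I₀) {x : E3} (hx : ‖x‖ = 1) :
    HasDerivAt (fun s : ℝ => uf Δ I₀ (s, x))
      (-(inner (𝕜 := ℝ) (mApp (projMat x) (gradient I₀ x)) (mApp Δ x))) 0 := by
  have hbase : HasDerivAt (fun s : ℝ => exp (s • (-Δ))) (-Δ) 0 := by
    have := hasDerivAt_exp_smul_const (-Δ) (0 : ℝ)
    rw [zero_smul, exp_zero, one_mul] at this
    exact this
  have hc : HasDerivAt (fun s : ℝ => mApp (exp (s • (-Δ))) x) (-(mApp Δ x)) 0 := by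
    have h := (appCLM x).hasFDerivAt.comp_hasDerivAt 0 hbase
    have hneg : appCLM x (-Δ) = -(mApp Δ x) := by rw [map_neg, appCLM_apply]
    have h' : HasDerivAt (fun s : ℝ => mApp (exp (s • (-Δ))) x) (appCLM x (-Δ)) 0 := h
    rw [hneg] at h'
    exact h'
  have hψ' : HasFDerivAt ψ (Px x) (mApp (exp ((0 : ℝ) • (-Δ))) x) := by
    rw [e0_lemma]; exact hasFDerivAt_psi hx
  have h2 : HasDerivAt (fun s : ℝ => ψ (mApp (exp (s • (-Δ))) x)) (Px x (-(mApp Δ x))) 0 :=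
    by have := hψ'.comp_hasDerivAt 0 hc; exact this
  have hI' : HasFDerivAt I₀ (fderiv ℝ I₀ x) (ψ (mApp (exp ((0 : ℝ) • (-Δ))) x)) := by
    rw [e0_lemma, psi_unit hx]
    exact ((hI.differentiable (by norm_num)) x).hasFDerivAt
  have h3 : HasDerivAt (fun s : ℝ => I₀ (ψ (mApp (exp (s • (-Δ))) x)))
      (fderiv ℝ I₀ x (Px x (-(mApp Δ x)))) 0 := hI'.comp_hasDerivAt 0 h2
  have h4 := h3.sub_const (I₀ x)
  have hval : fderiv ℝ I₀ x (Px x (-(mApp Δ x)))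
      = -(inner (𝕜 := ℝ) (mApp (projMat x) (gradient I₀ x)) (mApp Δ x)) := by
    rw [map_neg (Px x), map_neg (fderiv ℝ I₀ x)]
    congr 1
    have hPx : Px x (mApp Δ x) = mApp Δ x - (inner (𝕜 := ℝ) x (mApp Δ x)) • x := by
      simp [Px]
    rw [hPx, ← inner_gradient, inner_proj_eq]
  rw [hval] at h4
  exact h4

lemma Df1_zero (hI : ContDiff ℝ 2 I₀) {x : E3} (hx : ‖x‖ = 1) :
    Df1 Δ I₀ (0, x) = -(inner (𝕜 := ℝ) (mApp (projMat x) (gradient I₀ x)) (mApp Δ x)) := by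
  have hx0 : x ≠ 0 := by intro h; rw [h] at hx; simp at hx
  exact (hasDerivAt_uf Δ hI (0, x) hx0).unique (hasDerivAt_uf_zero Δ hI hx)

instance : IsFiniteMeasure μS := by
  constructor
  rw [μS, Measure.map_apply measurable_subtype_coe MeasurableSet.univ]
  exact measure_lt_top _ _

lemma sphere_measurable : MeasurableSet (Metric.sphere (0 : E3) 1) :=
  Metric.isClosed_sphere.measurableSet

lemma ae_norm_one : ∀ᵐ x ∂μS, ‖x‖ = 1 := by
  rw [ae_iff, μS, Measure.map_apply measurable_subtype_coe]
  · convert measure_empty (μ := (volume : Measure E3).toSphere)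
    ext y
    simp only [Set.mem_preimage, Set.mem_setOf_eq, Set.mem_empty_iff_false, iff_false,
      not_not]
    exact mem_sphere_zero_iff_norm.mp y.2
  · have : {x : E3 | ¬ ‖x‖ = 1} = (Metric.sphere (0 : E3) 1)ᶜ := by
      ext z; simp [mem_sphere_zero_iff_norm]
    rw [this]
    exact sphere_measurable.compl

lemma aesm_of_contOn {g : E3 → ℝ} (hg : ContinuousOn g {x : E3 | x ≠ 0}) :
    AEStronglyMeasurable g μS := by
  rw [μS, (MeasurableEmbedding.subtype_coe sphere_measurable).aestronglyMeasurable_map_iff]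
  have hc : Continuous (g ∘ (Subtype.val : Metric.sphere (0 : E3) 1 → E3)) := by
    apply hg.comp_continuous continuous_subtype_val
    intro y
    have : ‖(y : E3)‖ = 1 := mem_sphere_zero_iff_norm.mp y.2
    intro h; rw [h] at this; simp at this
  exact hc.aestronglyMeasurable

lemma deriv_under_integral (k k' : ℝ × E3 → ℝ)
    (hk : ContinuousOn k VV) (hk' : ContinuousOn k' VV)
    (hd : ∀ p : ℝ × E3, p.2 ≠ 0 → HasDerivAt (fun s => k (s, p.2)) (k' p) p.1)
    (t : ℝ) :
    HasDerivAt (fun s => ∫ x, k (s, x) ∂μS) (∫ x, k' (t, x) ∂μS) t := by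
  set K : Set (ℝ × E3) := Set.Icc (t - 1) (t + 1) ×ˢ Metric.sphere (0 : E3) 1 with hK
  have hKc : IsCompact K := isCompact_Icc.prod (isCompact_sphere 0 1)
  have hKV : K ⊆ VV := by
    intro p hp
    have h1 : ‖p.2‖ = 1 := mem_sphere_zero_iff_norm.mp hp.2
    intro h; rw [h] at h1; simp at h1
  obtain ⟨C, hC⟩ := hKc.exists_bound_of_continuousOn (hk.mono hKV)
  obtain ⟨C', hC'⟩ := hKc.exists_bound_of_continuousOn (hk'.mono hKV)
  have hball : ∀ s ∈ Metric.ball t 1, s ∈ Set.Icc (t - 1) (t + 1) := by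
    intro s hs
    rw [Metric.mem_ball, Real.dist_eq] at hs
    have := abs_lt.mp hs
    constructor <;> linarith [this.1, this.2]
  have haesm : ∀ s : ℝ, AEStronglyMeasurable (fun x => k (s, x)) μS := by
    intro s
    apply aesm_of_contOn
    have : ContinuousOn (fun x : E3 => k (s, x)) {x : E3 | x ≠ 0} := by
      apply hk.comp (Continuous.continuousOn (by continuity))
      intro x hx
      exact hx
    exact this
  have haesm' : AEStronglyMeasurable (fun x => k' (t, x)) μS := by
    apply aesm_of_contOn
    apply hk'.comp (Continuous.continuousOn (by continuity))
    intro x hx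
    exact hx
  have hint : Integrable (fun x => k (t, x)) μS := by
    refine (integrable_const C).mono' (haesm t) ?_
    filter_upwards [ae_norm_one] with x hx
    exact hC (t, x) ⟨⟨by linarith, by linarith⟩, mem_sphere_zero_iff_norm.mpr hx⟩
  have h := hasDerivAt_integral_of_dominated_loc_of_deriv_le (bound := fun _ => C')
    (F := fun s x => k (s, x)) (F' := fun s x => k' (s, x))
    (Metric.ball_mem_nhds t one_pos) (Filter.Eventually.of_forall haesm) hint haesm' ?_ (integrable_const C') ?_
  · exact h.2
  · filter_upwards [ae_norm_one] with x hx s hs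
    exact hC' (s, x) ⟨hball s hs, mem_sphere_zero_iff_norm.mpr hx⟩
  · filter_upwards [ae_norm_one] with x hx s _
    apply hd (s, x)
    intro h0
    have : ‖(0 : E3)‖ = (1:ℝ) := by rw [← h0]; exact hx
    simp at this

lemma sphPhi_eq (Δ : M3) (s : ℝ) (x : E3) :
    sphPhi (exp (s • Δ)) x = ψ (mApp (exp (s • (-Δ))) x) := by
  have h : exp (s • (-Δ)) = (exp (s • Δ))⁻¹ := by
    rw [smul_neg, Matrix.exp_neg]
  rw [sphPhi, ψ, h]

/-- For I̊ ∈ C² and Δ ∈ ℝ^{3×3}, the cost along the one-parameter group,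
G(t) := (1/2)∫_{S²} (I̊(φ(exp(tΔ), x)) − I̊(x))² dμ(x), is twice differentiable at t = 0
with G'(0) = 0 and G''(0) = ∫_{S²} ⟨(I₃ − xxᵀ)∇I̊(x), Δx⟩² dμ(x). -/
theorem cost_first_and_second_derivative (I₀ : E3 → ℝ) (hI : ContDiff ℝ 2 I₀) (Δ : M3) :
    ∃ G' : ℝ → ℝ,
      (∀ t : ℝ, HasDerivAt
        (fun s : ℝ => (1 / 2) * ∫ x, (I₀ (sphPhi (NormedSpace.exp (s • Δ)) x) - I₀ x) ^ 2 ∂μS)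
        (G' t) t) ∧
      G' 0 = 0 ∧
      HasDerivAt G'
        (∫ x, (inner (𝕜 := ℝ) (mApp (projMat x) (gradient I₀ x)) (mApp Δ x)) ^ 2 ∂μS) 0 := by
  have hucont : ContinuousOn (uf Δ I₀) VV := (contDiffOn_uf Δ hI).continuousOn
  have hd1cont : ContinuousOn (Df1 Δ I₀) VV := (contDiffOn_Df1 Δ hI).continuousOn
  have hd2cont : ContinuousOn (Df2 Δ I₀) VV := continuousOn_Df2 Δ hI
  refine ⟨fun t => ∫ x, uf Δ I₀ (t, x) * Df1 Δ I₀ (t, x) ∂μS, ?_, ?_, ?_⟩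
  · intro t
    have hfun : (fun s : ℝ =>
          (1 / 2 : ℝ) * ∫ x, (I₀ (sphPhi (NormedSpace.exp (s • Δ)) x) - I₀ x) ^ 2 ∂μS)
        = fun s : ℝ => (1 / 2 : ℝ) * ∫ x, (uf Δ I₀ (s, x)) ^ 2 ∂μS := by
      funext s
      congr 1
      have : (fun x : E3 => (I₀ (sphPhi (NormedSpace.exp (s • Δ)) x) - I₀ x) ^ 2)
          = fun x : E3 => (uf Δ I₀ (s, x)) ^ 2 := by
        funext x
        rw [uf, sphPhi_eq]
      rw [this]
    have H1 : HasDerivAt (fun s : ℝ => ∫ x, (uf Δ I₀ (s, x)) ^ 2 ∂μS)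
        (∫ x, 2 * (uf Δ I₀ (t, x) * Df1 Δ I₀ (t, x)) ∂μS) t := by
      apply deriv_under_integral (fun p => (uf Δ I₀ p) ^ 2)
        (fun p => 2 * (uf Δ I₀ p * Df1 Δ I₀ p))
        (hucont.pow 2) (continuousOn_const.mul (hucont.mul hd1cont))
      intro p hp
      have h := (hasDerivAt_uf Δ hI p hp).pow 2
      refine h.congr_deriv ?_
      push_cast
      ring
    rw [hfun]
    have h2 := H1.const_mul (1 / 2 : ℝ)
    refine h2.congr_deriv ?_
    rw [integral_const_mul]
    ring
  · have hz : (fun x => uf Δ I₀ (0, x) * Df1 Δ I₀ (0, x)) =ᵐ[μS] 0 := by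
      filter_upwards [ae_norm_one] with x hx
      rw [uf_zero Δ hx]
      simp
    exact integral_eq_zero_of_ae hz
  · have H2 : HasDerivAt (fun t : ℝ => ∫ x, uf Δ I₀ (t, x) * Df1 Δ I₀ (t, x) ∂μS)
        (∫ x, (Df1 Δ I₀ (0, x) * Df1 Δ I₀ (0, x) + uf Δ I₀ (0, x) * Df2 Δ I₀ (0, x)) ∂μS) 0 := by
      apply deriv_under_integral (fun p => uf Δ I₀ p * Df1 Δ I₀ p)
        (fun p => Df1 Δ I₀ p * Df1 Δ I₀ p + uf Δ I₀ p * Df2 Δ I₀ p)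
        (hucont.mul hd1cont) ((hd1cont.mul hd1cont).add (hucont.mul hd2cont))
      intro p hp
      exact (hasDerivAt_uf Δ hI p hp).mul (hasDerivAt_Df1 Δ hI p hp)
    have heq : (∫ x, (Df1 Δ I₀ (0, x) * Df1 Δ I₀ (0, x)
          + uf Δ I₀ (0, x) * Df2 Δ I₀ (0, x)) ∂μS)
        = ∫ x, (inner (𝕜 := ℝ) (mApp (projMat x) (gradient I₀ x)) (mApp Δ x)) ^ 2 ∂μS := by
      apply integral_congr_ae
      filter_upwards [ae_norm_one] with x hx
      rw [uf_zero Δ hx, Df1_zero Δ hI hx]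
      ring
    rw [heq] at H2
    exact H2

end
end

section
/- Let Ω : ℝ → ℝ³ be continuous, let R : ℝ → ℝ^{3×3} be differentiable with Ṙ(t) = R(t)Ω(t)_×, let η : ℝ → ℝ³ be differentiable with η̇(t) = η(t) × Ω(t), and let w ∈ ℝ³ be a constant vector. Define Γ(t) := R(t)ᵀ w η(t)ᵀ − (1/3)(η(t)ᵀ R(t)ᵀ w) I₃. Then Γ satisfies the Lie-bracket dynamics Γ̇(t) = Γ(t)Ω(t)_× − Ω(t)_× Γ(t) = [Γ(t), Ω(t)_×] for all t. -/
open Matrix MeasureTheory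

noncomputable section

abbrev V3 := Fin 3 → ℝ

attribute [local instance] Matrix.normedAddCommGroup Matrix.normedSpace

/-- The skew-symmetric matrix a_× associated with the cross product: a_× b = a × b. -/
noncomputable def skewMat (a : V3) : M3 :=
  !![0, -(a 2), a 1; a 2, 0, -(a 0); -(a 1), a 0, 0]


lemma hasDerivAt_matrix' {f : ℝ → M3} {f' : M3} {t : ℝ} :
    HasDerivAt f f' t ↔ ∀ i j, HasDerivAt (fun s => f s i j) (f' i j) t := by
  constructor
  · intro h i j
    exact hasDerivAt_pi.1 (hasDerivAt_pi.1 h i) j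
  · intro h
    exact hasDerivAt_pi.2 fun i => hasDerivAt_pi.2 fun j => h i j

/-- If Ṙ = RΩ_×, η̇ = η × Ω and w is constant, then
Γ := Rᵀwηᵀ − (1/3)(ηᵀRᵀw)I₃ satisfies Γ̇ = ΓΩ_× − Ω_×Γ = [Γ, Ω_×]. -/
theorem Gamma_Lie_bracket_dynamics
    (Ω : ℝ → V3) (hΩ : Continuous Ω)
    (R : ℝ → M3) (hR : ∀ t, HasDerivAt R (R t * skewMat (Ω t)) t)
    (η : ℝ → V3) (hη : ∀ t, HasDerivAt η (crossProduct (η t) (Ω t)) t)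
    (w : V3) :
    ∀ t, HasDerivAt
      (fun s => Matrix.vecMulVec ((R s)ᵀ *ᵥ w) (η s)
        - (((η s) ⬝ᵥ ((R s)ᵀ *ᵥ w)) / 3) • (1 : M3))
      ((Matrix.vecMulVec ((R t)ᵀ *ᵥ w) (η t)
          - (((η t) ⬝ᵥ ((R t)ᵀ *ᵥ w)) / 3) • (1 : M3)) * skewMat (Ω t)
        - skewMat (Ω t) * (Matrix.vecMulVec ((R t)ᵀ *ᵥ w) (η t)
          - (((η t) ⬝ᵥ ((R t)ᵀ *ᵥ w)) / 3) • (1 : M3))) t := by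
  intro t
  have hRe : ∀ i j, HasDerivAt (fun s => R s i j) ((R t * skewMat (Ω t)) i j) t :=
    fun i j => hasDerivAt_matrix'.1 (hR t) i j
  have hηe : ∀ j, HasDerivAt (fun s => η s j) ((crossProduct (η t) (Ω t)) j) t :=
    fun j => hasDerivAt_pi.1 (hη t) j
  have hA : ∀ i, HasDerivAt (fun s => ((R s)ᵀ *ᵥ w) i)
      (((R t * skewMat (Ω t))ᵀ *ᵥ w) i) t := by
    intro i
    simp only [Matrix.mulVec, dotProduct, Matrix.transpose_apply]
    exact HasDerivAt.fun_sum fun k _ => (hRe k i).mul_const (w k)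
  have hc : HasDerivAt (fun s => (η s) ⬝ᵥ ((R s)ᵀ *ᵥ w))
      (∑ k, ((crossProduct (η t) (Ω t)) k * ((R t)ᵀ *ᵥ w) k
        + η t k * ((R t * skewMat (Ω t))ᵀ *ᵥ w) k)) t := by
    simp only [dotProduct]
    exact HasDerivAt.fun_sum fun k _ => (hηe k).mul (hA k)
  apply hasDerivAt_matrix'.2
  intro i j
  have key : HasDerivAt
      (fun s => ((R s)ᵀ *ᵥ w) i * η s j - ((η s) ⬝ᵥ ((R s)ᵀ *ᵥ w)) / 3 * (1 : M3) i j)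
      ((((R t * skewMat (Ω t))ᵀ *ᵥ w) i * η t j
          + ((R t)ᵀ *ᵥ w) i * (crossProduct (η t) (Ω t)) j)
        - (∑ k, ((crossProduct (η t) (Ω t)) k * ((R t)ᵀ *ᵥ w) k
            + η t k * ((R t * skewMat (Ω t))ᵀ *ᵥ w) k)) / 3 * (1 : M3) i j) t :=
    ((hA i).mul (hηe j)).sub ((hc.div_const 3).mul_const _)
  convert key using 1
  · rfl
  fin_cases i <;> fin_cases j <;>
  · simp only [Matrix.sub_apply, Matrix.smul_apply, smul_eq_mul, Matrix.mul_apply,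
      Matrix.vecMulVec_apply, Matrix.one_apply, Matrix.mulVec, dotProduct,
      Matrix.transpose_apply, Fin.sum_univ_three, cross_apply, skewMat,
      Matrix.cons_val', Matrix.cons_val_zero, Matrix.cons_val_one, Matrix.head_cons,
      Matrix.empty_val', Matrix.cons_val_fin_one, Matrix.head_fin_const, Matrix.tail_cons,
      Fin.isValue, Matrix.cons_val_two]
    simp [Fin.ext_iff, Matrix.vecHead, Matrix.vecTail]
    ring

end
end
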